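/- arXiv:2206.05073 — 6 statements merged into one kernel-verified Lean document; each statement's English description precedes it below -/
import Mathlib

section
/- Let φ, ψ be smooth compactly supported complex-valued functions on ℝ, and denote by f̂(η) = (2π)^{-1/2} ∫_ℝ e^{iηx} f(x) dx the Fourier transform. Then the limit lim_{ε→0⁺} ( −(1/π) ∬_{ℝ×ℝ} conj(φ(x)) ψ(y) (x − y − iε)^{−2} dx dy ) exists and equals 2 ∫_0^∞ η conj(φ̂(η)) ψ̂(η) dη. -/
open MeasureTheory Filter Topology

/-- Fourier transform with the convention `f̂ η = (2π)^(-1/2) ∫ e^{iηx} f x dx`. -/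
noncomputable def fourierCI (f : ℝ → ℂ) (η : ℝ) : ℂ :=
  ((2 * Real.pi) ^ (-(1 / 2 : ℝ)) : ℝ) * ∫ x : ℝ, Complex.exp (Complex.I * η * x) * f x

open Set Complex FourierTransform Real

noncomputable def Jt (f : ℝ → ℂ) (η : ℝ) : ℂ := ∫ x : ℝ, Complex.exp (Complex.I * η * x) * f x

lemma exp_decay_int {c : ℝ} (hc : 0 < c) :
    IntegrableOn (fun t : ℝ => t * Real.exp (-(c * t))) (Ioi 0) := by
  have h := integrableOn_rpow_mul_exp_neg_mul_rpow (p := 1) (s := 1) (b := c)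
    (by norm_num) one_pos hc
  refine h.congr_fun (fun x hx => ?_) measurableSet_Ioi
  simp [Real.rpow_one]

lemma hw_tendsto {c : ℝ} (hc : 0 < c) :
    Tendsto (fun t : ℝ => t * Real.exp (-(c * t))) atTop (𝓝 0) := by
  have h1 : Tendsto (fun t : ℝ => c * t) atTop atTop :=
    Tendsto.const_mul_atTop hc tendsto_id
  have h2 := (Real.tendsto_pow_mul_exp_neg_atTop_nhds_zero 1).comp h1
  have h3 : Tendsto (fun t : ℝ => c⁻¹ * ((c * t) ^ 1 * Real.exp (-(c * t)))) atTop
      (𝓝 (c⁻¹ * 0)) := h2.const_mul _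
  rw [mul_zero] at h3
  refine h3.congr (fun t => ?_)
  field_simp

lemma norm_texp (s : ℂ) (t : ℝ) :
    ‖(t : ℂ) * Complex.exp (-(s * t))‖ = |t| * Real.exp (-(s.re * t)) := by
  rw [norm_mul, Complex.norm_exp, Complex.norm_real, Real.norm_eq_abs]
  congr 2
  simp [Complex.mul_re]

lemma aux_integral_texp {s : ℂ} (hs : 0 < s.re) :
    ∫ t in Ioi (0:ℝ), (t : ℂ) * Complex.exp (-(s * t)) = (s ^ 2)⁻¹ := by
  have hs0 : s ≠ 0 := fun h => by simp [h] at hs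
  set f : ℝ → ℂ := fun t => -(1 / s) * ((t : ℂ) * Complex.exp (-(s * t)))
      + -(1 / s ^ 2) * Complex.exp (-(s * t)) with hf
  have hg : ∀ z : ℂ, HasDerivAt (fun z : ℂ => -(1 / s) * (z * Complex.exp (-(s * z)))
      + -(1 / s ^ 2) * Complex.exp (-(s * z))) (z * Complex.exp (-(s * z))) z := by
    intro z
    have he : HasDerivAt (fun z : ℂ => Complex.exp (-(s * z)))
        (Complex.exp (-(s * z)) * (-s)) z := by
      have : HasDerivAt (fun z : ℂ => -(s * z)) (-s) z := by
        simpa using ((hasDerivAt_id z).const_mul s).fun_neg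
      exact this.cexp
    have hm : HasDerivAt (fun z : ℂ => z * Complex.exp (-(s * z)))
        (1 * Complex.exp (-(s * z)) + z * (Complex.exp (-(s * z)) * (-s))) z :=
      (hasDerivAt_id z).mul he
    have := ((hm.const_mul (-(1/s))).add (he.const_mul (-(1/s^2))))
    refine this.congr_deriv ?_
    field_simp
    ring
  have hderiv : ∀ t : ℝ, t ∈ Ici (0:ℝ) →
      HasDerivAt f ((t : ℂ) * Complex.exp (-(s * t))) t := fun t _ => (hg t).comp_ofReal
  have hcont : Continuous fun t : ℝ => (t : ℂ) * Complex.exp (-(s * t)) := by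
    fun_prop
  have f'int : IntegrableOn (fun t : ℝ => (t : ℂ) * Complex.exp (-(s * t))) (Ioi 0) := by
    refine Integrable.mono' (exp_decay_int hs) hcont.aestronglyMeasurable.restrict ?_
    filter_upwards [ae_restrict_mem measurableSet_Ioi] with t ht
    rw [norm_texp, abs_of_pos ht]
  have hlim : Tendsto f atTop (𝓝 0) := by
    have h1 : Tendsto (fun t : ℝ => (t : ℂ) * Complex.exp (-(s * t))) atTop (𝓝 0) := by
      rw [tendsto_zero_iff_norm_tendsto_zero]
      have := hw_tendsto hs
      refine Tendsto.congr' ?_ this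
      filter_upwards [eventually_ge_atTop (0:ℝ)] with t ht
      rw [norm_texp, _root_.abs_of_nonneg ht]
    have h2 : Tendsto (fun t : ℝ => Complex.exp (-(s * t))) atTop (𝓝 0) := by
      rw [tendsto_zero_iff_norm_tendsto_zero]
      have hb : Tendsto (fun t : ℝ => Real.exp (-(s.re * t))) atTop (𝓝 0) := by
        apply Real.tendsto_exp_atBot.comp
        have : Tendsto (fun t : ℝ => s.re * t) atTop atTop :=
          Tendsto.const_mul_atTop hs tendsto_id
        exact tendsto_neg_atTop_atBot.comp this
      refine hb.congr (fun t => ?_)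
      rw [Complex.norm_exp]
      congr 1
      simp [Complex.mul_re]
    have h3 := ((h1.const_mul (-(1/s))).add (h2.const_mul (-(1/s^2))))
    rw [hf]
    simpa using h3
  have := integral_Ioi_of_hasDerivAt_of_tendsto' hderiv f'int hlim
  rw [this, hf]
  simp only [Complex.ofReal_zero, mul_zero, neg_zero, mul_zero, zero_mul, Complex.exp_zero]
  field_simp
  ring

lemma kernel_repr {ε : ℝ} (hε : 0 < ε) (x y : ℝ) :
    (((x : ℂ) - (y : ℂ) - Complex.I * ε) ^ 2)⁻¹
      = -∫ η in Ioi (0:ℝ), (η : ℂ)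
          * Complex.exp (-(Complex.I * ((x : ℂ) - (y : ℂ) - Complex.I * ε) * η)) := by
  set z : ℂ := (x : ℂ) - (y : ℂ) - Complex.I * ε with hz
  have hre : 0 < (Complex.I * z).re := by
    simp [hz, Complex.mul_re, Complex.sub_im, Complex.sub_re]
    exact hε
  have h := aux_integral_texp hre
  have hsq : (Complex.I * z) ^ 2 = -(z ^ 2) := by
    rw [mul_pow, Complex.I_sq]; ring
  rw [hsq] at h
  have : ∫ η in Ioi (0:ℝ), (η : ℂ) * Complex.exp (-(Complex.I * z * η)) = (-(z ^ 2))⁻¹ := h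
  rw [this]
  rw [inv_neg, neg_neg]


variable {f : ℝ → ℂ}

lemma Jt_eq_fourier (hf : Integrable f) (η : ℝ) :
    Jt f η = 𝓕 f (-(η / (2 * Real.pi))) := by
  rw [Real.fourier_eq', Jt]
  congr 1 with x
  rw [smul_eq_mul]
  congr 1
  rw [RCLike.inner_apply]
  simp only [conj_trivial]
  have hπ : (Real.pi : ℂ) ≠ 0 := Complex.ofReal_ne_zero.mpr Real.pi_ne_zero
  congr 1
  push_cast
  field_simp

lemma norm_cexp_mul (η x : ℝ) (f : ℝ → ℂ) :
    ‖Complex.exp (Complex.I * η * x) * f x‖ = ‖f x‖ := by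
  rw [norm_mul, Complex.norm_exp]
  have : (Complex.I * η * x).re = 0 := by simp [Complex.mul_re]
  rw [this, Real.exp_zero, one_mul]

lemma Jt_continuous (hf : Integrable f) : Continuous (Jt f) := by
  refine continuous_of_dominated (F := fun (η x : ℝ) => Complex.exp (Complex.I * η * x) * f x)
    (bound := fun x => ‖f x‖) (fun η => ?_) (fun η => ?_) hf.norm ?_
  · exact ((Complex.continuous_exp.comp (by fun_prop)).aestronglyMeasurable).mul hf.1
  · exact ae_of_all _ fun x => le_of_eq (norm_cexp_mul η x f)
  · exact ae_of_all _ fun x => by fun_prop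

lemma Jt_norm_le (hf : Integrable f) (η : ℝ) : ‖Jt f η‖ ≤ ∫ x, ‖f x‖ := by
  refine (norm_integral_le_integral_norm _).trans (le_of_eq ?_)
  congr 1 with x
  rw [norm_mul, Complex.norm_exp]
  have : (Complex.I * η * x).re = 0 := by simp [Complex.mul_re]
  rw [this, Real.exp_zero, one_mul]



variable {f : ℝ → ℂ}

lemma iterated_integrable (hf : ContDiff ℝ (⊤ : ℕ∞) f) (hfc : HasCompactSupport f) :
    ∀ n : ℕ, (n : ℕ∞) ≤ (⊤ : ℕ∞) → Integrable (iteratedDeriv n f) := by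
  intro n _
  have hs : ∀ n : ℕ, HasCompactSupport (deriv^[n] f) := by
    intro n
    induction n with
    | zero => simpa using hfc
    | succ k ih => rw [Function.iterate_succ_apply']; exact ih.deriv
  have hc : ContDiff ℝ (⊤:ℕ∞) (deriv^[n] f) := ContDiff.iterate_deriv n (hf.of_le (by simp))
  rw [iteratedDeriv_eq_iterate]
  exact hc.continuous.integrable_of_hasCompactSupport (hs n)

lemma fourier_norm_le (g : ℝ → ℂ) (ξ : ℝ) : ‖𝓕 g ξ‖ ≤ ∫ x, ‖g x‖ := by
  rw [Real.fourier_eq]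
  refine (norm_integral_le_integral_norm _).trans (le_of_eq ?_)
  congr 1 with v
  exact Circle.norm_smul _ _

lemma Jt_decay (hf : ContDiff ℝ (⊤ : ℕ∞) f) (hfc : HasCompactSupport f) (η : ℝ) :
    η ^ 2 * ‖Jt f η‖ ≤ ∫ x, ‖iteratedDeriv 2 f x‖ := by
  have hint := iterated_integrable hf hfc
  have key := Real.fourier_iteratedDeriv (N := (⊤ : ℕ∞)) (n := 2) (hf.of_le (by simp)) hint le_top
  set ξ : ℝ := -(η / (2 * Real.pi)) with hξ
  have hnorm : ‖((2 * (Real.pi:ℂ) * Complex.I * (ξ:ℝ)) ^ 2 : ℂ)‖ = η ^ 2 := by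
    rw [norm_pow, norm_mul, norm_mul, norm_mul]
    simp only [Complex.norm_I, mul_one, Complex.norm_ofNat, Complex.norm_real,
      Real.norm_eq_abs]
    rw [hξ, abs_neg, abs_div, abs_mul]
    rw [abs_of_pos Real.pi_pos, abs_of_pos (by norm_num : (0:ℝ) < 2)]
    have hπ : (0:ℝ) < 2 * Real.pi := by positivity
    field_simp
    exact sq_abs η
  have heq : η ^ 2 * ‖Jt f η‖ = ‖𝓕 (iteratedDeriv 2 f) ξ‖ := by
    rw [Jt_eq_fourier (hint 0 (by norm_num) |>.congr (by simp [iteratedDeriv_zero])) η, ← hξ]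
    rw [congrFun key ξ, norm_smul, hnorm]
  rw [heq]
  exact fourier_norm_le _ _







section identity


lemma norm_exp_I_mul (η x : ℝ) : ‖Complex.exp (Complex.I * η * x)‖ = 1 := by
  have := norm_cexp_mul η x (fun _ => (1:ℂ))
  simpa using this

lemma norm_exp_neg_I_mul (η x : ℝ) : ‖Complex.exp (-(Complex.I * η * x))‖ = 1 := by
  rw [Complex.norm_exp]
  have : (-(Complex.I * η * x)).re = 0 := by simp [Complex.mul_re]
  rw [this, Real.exp_zero]

lemma main_identity {φ ψ : ℝ → ℂ} (hφ : Continuous φ) (hφi : Integrable φ)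
    (hψ : Continuous ψ) (hψi : Integrable ψ) {ε : ℝ} (hε : 0 < ε) :
    (∫ x : ℝ, ∫ y : ℝ,
        (starRingEnd ℂ) (φ x) * ψ y * (((x : ℂ) - (y : ℂ) - Complex.I * ε) ^ 2)⁻¹)
      = -∫ η in Ioi (0:ℝ),
          (starRingEnd ℂ) (Jt φ η) * (((η : ℂ) * ((Real.exp (-(ε * η)) : ℝ) : ℂ)) * Jt ψ η) := by
  set ν : Measure ℝ := volume.restrict (Ioi (0:ℝ)) with hν
  -- building blocks
  set A : ℝ → ℝ → ℂ := fun x η => (starRingEnd ℂ) (φ x) * Complex.exp (-(Complex.I * η * x))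
    with hA
  set B : ℝ → ℝ → ℂ := fun y η => ψ y * Complex.exp (Complex.I * η * y) with hB
  set w : ℝ → ℂ := fun η => (η : ℂ) * ((Real.exp (-(ε * η)) : ℝ) : ℂ) with hw
  set P : ℝ → ℝ → ℝ → ℂ := fun x y η => A x η * B y η * w η with hP
  have hwnorm : ∀ η : ℝ, ‖w η‖ = |η| * Real.exp (-(ε * η)) := by
    intro η
    rw [hw, norm_mul, Complex.norm_real, Complex.norm_real, Real.norm_eq_abs,
      Real.norm_eq_abs, Real.abs_exp]
  have hAnorm : ∀ x η : ℝ, ‖A x η‖ = ‖φ x‖ := by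
    intro x η
    rw [hA]; simp only [norm_mul, RCLike.norm_conj, norm_exp_neg_I_mul, mul_one]
  have hBnorm : ∀ y η : ℝ, ‖B y η‖ = ‖ψ y‖ := by
    intro y η
    rw [hB]; simp only [norm_mul, norm_exp_I_mul, mul_one]
  have hwi : Integrable (fun η : ℝ => |η| * Real.exp (-(ε * η))) ν := by
    refine (exp_decay_int hε).congr_fun (fun t ht => ?_) measurableSet_Ioi
    rw [abs_of_pos ht]
  have hAcont : Continuous fun p : ℝ × ℝ => A p.1 p.2 := by
    rw [hA]
    exact (continuous_star.comp (hφ.comp continuous_fst)).mul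
      (Complex.continuous_exp.comp (by fun_prop))
  have hBcont : Continuous fun p : ℝ × ℝ => B p.1 p.2 := by
    rw [hB]
    exact (hψ.comp continuous_fst).mul (Complex.continuous_exp.comp (by fun_prop))
  have hwcont : Continuous w := by rw [hw]; fun_prop
  -- exponential factorization
  have hexp : ∀ x y η : ℝ,
      (starRingEnd ℂ) (φ x) * ψ y
          * ((η : ℂ) * Complex.exp (-(Complex.I * ((x : ℂ) - (y : ℂ) - Complex.I * ε) * η)))
        = P x y η := by
    intro x y η
    rw [hP, hA, hB, hw]
    have : Complex.exp (-(Complex.I * ((x : ℂ) - (y : ℂ) - Complex.I * ε) * η))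
        = Complex.exp (-(Complex.I * η * x)) * Complex.exp (Complex.I * η * y)
          * ((Real.exp (-(ε * η)) : ℝ) : ℂ) := by
      rw [Complex.ofReal_exp, ← Complex.exp_add, ← Complex.exp_add]
      congr 1
      push_cast
      linear_combination (↑η * ↑ε : ℂ) * Complex.I_mul_I
    rw [this]
    ring
  -- step 1 : reduce to triple integral of P
  have step1 : (∫ x : ℝ, ∫ y : ℝ,
        (starRingEnd ℂ) (φ x) * ψ y * (((x : ℂ) - (y : ℂ) - Complex.I * ε) ^ 2)⁻¹)
      = -∫ x : ℝ, ∫ y : ℝ, ∫ η in Ioi (0:ℝ), P x y η := by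
    rw [← integral_neg]
    congr 1 with x
    rw [← integral_neg]
    congr 1 with y
    rw [kernel_repr hε, mul_neg]
    congr 1
    rw [← integral_const_mul]
    exact integral_congr_ae (ae_of_all _ fun η => hexp x y η)
  rw [step1]
  -- step 2 : swap y and η  (for each fixed x)
  have swap1 : ∀ x : ℝ, (∫ y : ℝ, ∫ η in Ioi (0:ℝ), P x y η)
      = ∫ η in Ioi (0:ℝ), ∫ y : ℝ, P x y η := by
    intro x
    apply integral_integral_swap
    have hbi : Integrable (fun z : ℝ × ℝ => ‖ψ z.1‖ * (|z.2| * Real.exp (-(ε * z.2))))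
        (volume.prod ν) := hψi.norm.mul_prod hwi
    refine (hbi.const_mul ‖φ x‖).mono' ?_ ?_
    · exact (Continuous.aestronglyMeasurable (by
        exact ((hAcont.comp (continuous_const.prodMk continuous_snd)).mul
          (hBcont.comp (continuous_fst.prodMk continuous_snd))).mul
          (hwcont.comp continuous_snd)))
    · filter_upwards with z
      simp only [Function.uncurry, hP]
      rw [norm_mul, norm_mul, hAnorm, hBnorm, hwnorm]
      exact le_of_eq (by ring)
  -- step 3 : inner y-integral gives Jt ψ
  have inner_y : ∀ x η : ℝ, (∫ y : ℝ, P x y η) = A x η * w η * Jt ψ η := by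
    intro x η
    have : (fun y : ℝ => P x y η) = fun y => (A x η * w η) * B y η := by
      funext y; rw [hP]; ring
    rw [this, integral_const_mul]
    congr 1
    rw [Jt]
    congr 1 with y
    rw [hB]; ring
  -- step 4 : swap x and η
  have swap2 : (∫ x : ℝ, ∫ η in Ioi (0:ℝ), A x η * w η * Jt ψ η)
      = ∫ η in Ioi (0:ℝ), ∫ x : ℝ, A x η * w η * Jt ψ η := by
    apply integral_integral_swap
    have hbi : Integrable (fun z : ℝ × ℝ =>
        ‖φ z.1‖ * (|z.2| * Real.exp (-(ε * z.2)) * (∫ t, ‖ψ t‖)))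
        (volume.prod ν) := hφi.norm.mul_prod (hwi.mul_const _)
    refine hbi.mono' ?_ ?_
    · exact (Continuous.aestronglyMeasurable (by
        exact ((hAcont.mul (hwcont.comp continuous_snd)).mul
          ((Jt_continuous hψi).comp continuous_snd))))
    · filter_upwards with z
      simp only [Function.uncurry]
      rw [norm_mul, norm_mul, hAnorm, hwnorm]
      calc ‖φ z.1‖ * (|z.2| * Real.exp (-(ε * z.2))) * ‖Jt ψ z.2‖
          ≤ ‖φ z.1‖ * (|z.2| * Real.exp (-(ε * z.2))) * (∫ t, ‖ψ t‖) := by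
            refine mul_le_mul_of_nonneg_left (Jt_norm_le hψi z.2) (by positivity)
        _ = ‖φ z.1‖ * (|z.2| * Real.exp (-(ε * z.2)) * (∫ t, ‖ψ t‖)) := by ring
  -- step 5 : inner x-integral gives conj (Jt φ)
  have inner_x : ∀ η : ℝ, (∫ x : ℝ, A x η * w η * Jt ψ η)
      = (starRingEnd ℂ) (Jt φ η) * (w η * Jt ψ η) := by
    intro η
    have : (fun x : ℝ => A x η * w η * Jt ψ η) = fun x => A x η * (w η * Jt ψ η) := by
      funext x; ring
    rw [this, integral_mul_const]
    congr 1
    rw [Jt, ← integral_conj]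
    congr 1 with x
    have hc : (starRingEnd ℂ) (Complex.exp (Complex.I * η * x))
        = Complex.exp (-(Complex.I * η * x)) := by
      rw [← Complex.exp_conj]
      congr 1
      simp only [map_mul, Complex.conj_I, Complex.conj_ofReal]
      ring
    rw [hA, map_mul, hc, mul_comm]
  -- assemble
  congr 1
  calc (∫ x : ℝ, ∫ y : ℝ, ∫ η in Ioi (0:ℝ), P x y η)
      = ∫ x : ℝ, ∫ η in Ioi (0:ℝ), A x η * w η * Jt ψ η := by
        congr 1 with x
        rw [swap1 x]
        exact integral_congr_ae (ae_of_all _ fun η => inner_y x η)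
    _ = ∫ η in Ioi (0:ℝ), ∫ x : ℝ, A x η * w η * Jt ψ η := swap2
    _ = ∫ η in Ioi (0:ℝ), (starRingEnd ℂ) (Jt φ η) * (w η * Jt ψ η) :=
        integral_congr_ae (ae_of_all _ fun η => inner_x η)

end identity



variable {φ ψ : ℝ → ℂ}

lemma bound_integrable (hφ : ContDiff ℝ (⊤ : ℕ∞) φ) (hφc : HasCompactSupport φ)
    (hψ : ContDiff ℝ (⊤ : ℕ∞) ψ) (hψc : HasCompactSupport ψ) :
    IntegrableOn (fun η : ℝ => |η| * (‖Jt φ η‖ * ‖Jt ψ η‖)) (Ioi 0) := by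
  have hφi : Integrable φ := hφ.continuous.integrable_of_hasCompactSupport hφc
  have hψi : Integrable ψ := hψ.continuous.integrable_of_hasCompactSupport hψc
  have hcont : Continuous fun η : ℝ => |η| * (‖Jt φ η‖ * ‖Jt ψ η‖) :=
    continuous_abs.mul ((Jt_continuous hφi).norm.mul (Jt_continuous hψi).norm)
  have hIoc : IntegrableOn (fun η : ℝ => |η| * (‖Jt φ η‖ * ‖Jt ψ η‖)) (Ioc (0:ℝ) 1) :=
    hcont.integrableOn_Ioc
  have hIoi : IntegrableOn (fun η : ℝ => |η| * (‖Jt φ η‖ * ‖Jt ψ η‖)) (Ioi (1:ℝ)) := by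
    set Cφ := ∫ x, ‖iteratedDeriv 2 φ x‖ with hCφ
    set Cψ := ∫ x, ‖iteratedDeriv 2 ψ x‖ with hCψ
    have hCφ0 : 0 ≤ Cφ := integral_nonneg fun x => norm_nonneg _
    have hCψ0 : 0 ≤ Cψ := integral_nonneg fun x => norm_nonneg _
    have h3 : IntegrableOn (fun η : ℝ => Cφ * Cψ * η ^ (-3:ℝ)) (Ioi 1) :=
      (integrableOn_Ioi_rpow_of_lt (by norm_num) one_pos).const_mul _
    refine h3.mono' hcont.aestronglyMeasurable.restrict ?_
    rw [ae_restrict_iff' measurableSet_Ioi]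
    filter_upwards with η hη
    have hη1 : (1:ℝ) < η := hη
    have hηpos : (0:ℝ) < η := lt_trans one_pos hη1
    have h1 := Jt_decay hφ hφc η
    have h2 := Jt_decay hψ hψc η
    rw [← hCφ] at h1
    rw [← hCψ] at h2
    have key : η ^ 2 * ‖Jt φ η‖ * (η ^ 2 * ‖Jt ψ η‖) ≤ Cφ * Cψ :=
      mul_le_mul h1 h2 (by positivity) hCφ0
    have hrp : η ^ (-3:ℝ) = (η ^ 3)⁻¹ := by
      rw [Real.rpow_neg hηpos.le]
      norm_num
    rw [Real.norm_of_nonneg (by positivity), hrp, _root_.abs_of_pos hηpos,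
      show Cφ * Cψ * (η ^ 3)⁻¹ = Cφ * Cψ / η ^ 3 by ring, le_div_iff₀ (by positivity)]
    nlinarith [norm_nonneg (Jt φ η), norm_nonneg (Jt ψ η), key, hη1]
  have : Ioi (0:ℝ) = Ioc 0 1 ∪ Ioi 1 := (Ioc_union_Ioi_eq_Ioi zero_le_one).symm
  rw [this]
  exact hIoc.union hIoi

lemma limit_part (hφ : ContDiff ℝ (⊤ : ℕ∞) φ) (hφc : HasCompactSupport φ)
    (hψ : ContDiff ℝ (⊤ : ℕ∞) ψ) (hψc : HasCompactSupport ψ) :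
    Tendsto (fun ε : ℝ => ∫ η in Ioi (0:ℝ),
        (starRingEnd ℂ) (Jt φ η) * (((η : ℂ) * ((Real.exp (-(ε * η)) : ℝ) : ℂ)) * Jt ψ η))
      (𝓝[>] (0:ℝ))
      (𝓝 (∫ η in Ioi (0:ℝ), (starRingEnd ℂ) (Jt φ η) * ((η : ℂ) * Jt ψ η))) := by
  have hφi : Integrable φ := hφ.continuous.integrable_of_hasCompactSupport hφc
  have hψi : Integrable ψ := hψ.continuous.integrable_of_hasCompactSupport hψc
  refine tendsto_integral_filter_of_dominated_convergence
    (fun η : ℝ => |η| * (‖Jt φ η‖ * ‖Jt ψ η‖)) ?_ ?_ (bound_integrable hφ hφc hψ hψc) ?_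
  · filter_upwards with ε
    refine Continuous.aestronglyMeasurable ?_ |>.restrict
    exact (continuous_star.comp (Jt_continuous hφi)).mul
      (((Complex.continuous_ofReal.mul
        (Complex.continuous_ofReal.comp (by fun_prop))).mul (Jt_continuous hψi)))
  · filter_upwards [self_mem_nhdsWithin] with ε hε
    rw [ae_restrict_iff' measurableSet_Ioi]
    filter_upwards with η hη
    have hexp1 : Real.exp (-(ε * η)) ≤ 1 :=
      Real.exp_le_one_iff.mpr (by nlinarith [mem_Ioi.mp hε, mem_Ioi.mp hη])
    rw [norm_mul, RCLike.norm_conj, norm_mul, norm_mul, Complex.norm_real, Complex.norm_real,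
      Real.norm_eq_abs, Real.norm_eq_abs, Real.abs_exp]
    calc ‖Jt φ η‖ * (|η| * Real.exp (-(ε * η)) * ‖Jt ψ η‖)
        ≤ ‖Jt φ η‖ * (|η| * 1 * ‖Jt ψ η‖) := by
          refine mul_le_mul_of_nonneg_left ?_ (norm_nonneg _)
          refine mul_le_mul_of_nonneg_right (mul_le_mul_of_nonneg_left hexp1 (abs_nonneg _))
            (norm_nonneg _)
      _ = |η| * (‖Jt φ η‖ * ‖Jt ψ η‖) := by ring
  · refine ae_of_all _ fun η => ?_
    have he : Tendsto (fun ε : ℝ => ((Real.exp (-(ε * η)) : ℝ) : ℂ)) (𝓝[>] (0:ℝ)) (𝓝 1) := by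
      have hcont : Continuous fun ε : ℝ => ((Real.exp (-(ε * η)) : ℝ) : ℂ) := by fun_prop
      have := hcont.tendsto 0
      simp only [zero_mul, neg_zero, Real.exp_zero, Complex.ofReal_one] at this
      exact this.mono_left nhdsWithin_le_nhds
    have := ((he.const_mul ((η:ℂ))).mul_const (Jt ψ η)).const_mul ((starRingEnd ℂ) (Jt φ η))
    simpa using this

/-- The Kay–Wald horizon bilinear form
`−lim_{ε→0⁺}(1/π)∬ conj(φ x) ψ y (x−y−iε)^{−2} dx dy` exists and is computed by the
restriction of the Fourier transform to positive frequencies with weight `2η dη`. -/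




theorem horizon_form_eq_positive_frequency_pairing
    (φ ψ : ℝ → ℂ) (hφ : ContDiff ℝ (⊤ : ℕ∞) φ) (hφc : HasCompactSupport φ)
    (hψ : ContDiff ℝ (⊤ : ℕ∞) ψ) (hψc : HasCompactSupport ψ) :
    Tendsto
      (fun ε : ℝ =>
        -(1 / (Real.pi : ℂ)) *
          ∫ x : ℝ, ∫ y : ℝ,
            (starRingEnd ℂ) (φ x) * ψ y * (((x : ℂ) - (y : ℂ) - Complex.I * ε) ^ 2)⁻¹)
      (𝓝[>] (0 : ℝ))
      (𝓝 (2 * ∫ η in Set.Ioi (0 : ℝ),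
        (η : ℂ) * (starRingEnd ℂ) (fourierCI φ η) * fourierCI ψ η)) := by
  have hφi : Integrable φ := hφ.continuous.integrable_of_hasCompactSupport hφc
  have hψi : Integrable ψ := hψ.continuous.integrable_of_hasCompactSupport hψc
  have hπ : (Real.pi : ℂ) ≠ 0 := Complex.ofReal_ne_zero.mpr Real.pi_ne_zero
  set c : ℝ := (2 * Real.pi) ^ (-(1 / 2 : ℝ)) with hc
  have hfc : ∀ (f : ℝ → ℂ) (η : ℝ), fourierCI f η = ((c : ℝ) : ℂ) * Jt f η := fun _ _ => rfl
  have hccC : ((c : ℝ) : ℂ) * c * (2 * (Real.pi : ℂ)) = 1 := by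
    have hcc : c * c = (2 * Real.pi)⁻¹ := by
      have h12 : (-(1/2:ℝ)) + -(1/2) = -1 := by norm_num
      rw [hc, ← Real.rpow_add (by positivity), h12, Real.rpow_neg_one]
    rw [← Complex.ofReal_mul, hcc, Complex.ofReal_inv]
    push_cast
    exact inv_mul_cancel₀ (mul_ne_zero two_ne_zero hπ)
  -- value identification
  have hval : (2 : ℂ) * (∫ η in Ioi (0:ℝ),
        (η : ℂ) * (starRingEnd ℂ) (fourierCI φ η) * fourierCI ψ η)
      = (1 / (Real.pi : ℂ)) *
          ∫ η in Ioi (0:ℝ), (starRingEnd ℂ) (Jt φ η) * ((η : ℂ) * Jt ψ η) := by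
    rw [← integral_const_mul, ← integral_const_mul]
    refine integral_congr_ae (ae_of_all _ fun η => ?_)
    simp only [hfc, map_mul, Complex.conj_ofReal]
    rw [one_div, inv_mul_eq_div, eq_div_iff hπ]
    linear_combination ((η : ℂ) * (starRingEnd ℂ) (Jt φ η) * Jt ψ η) * hccC
  rw [hval]
  have hlim := (limit_part hφ hφc hψ hψc).const_mul (1 / (Real.pi : ℂ))
  refine Tendsto.congr' ?_ hlim
  filter_upwards [self_mem_nhdsWithin] with ε hε
  rw [main_identity hφ.continuous hφi hψ.continuous hψi (mem_Ioi.mp hε)]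
  ring
end

section
/- Let a, λ, E, L, K, r₀ ∈ ℝ with a ≠ 0 and E ≠ 0. Set χ = 1 + a²λ and suppose χ ≠ 0. Let Δ(r) = (1 − λr²)(r² + a²) − 2r with derivative Δ'(r) = 2r(1 − λr²) − 2λr(r² + a²) − 2, and let R(r) = χ²((r² + a²)E − aL)² − K·Δ(r) with derivative R'(r) = 4χ²rE((r² + a²)E − aL) − K·Δ'(r). Suppose Δ'(r₀) ≠ 0, (r₀² + a²)E − aL ≠ 0, R(r₀) = 0 and R'(r₀) = 0. Then L/E = ((r₀² + a²)Δ'(r₀) − 4r₀Δ(r₀)) / (a Δ'(r₀)) and K/(χ²E²) = 16 r₀² Δ(r₀) / Δ'(r₀)². -/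
/-!
At a double root `r₀` of `R = χ² P² - K Δ`, with `P(r) = (r² + a²)E - aL` and `P'(r) = 2rE`,
the two conditions `χ² P² = K Δ` and `2χ² P P' = K Δ'` say that `P²` and `Δ` are proportional to
first order at `r₀`, so their Wronskian `P (P Δ' - 2 P' Δ)` vanishes. Since `P(r₀) ≠ 0` this is a
linear equation for `L`, and substituting back into `K Δ' = 2χ² P P'` gives `K`.
-/

section DoubleRoot

variable {c P P' K D D' : ℝ}

theorem mul_sub_mul_eq_zero_of_double_root (hc : c ≠ 0) (hP : P ≠ 0)
    (h0 : c * P ^ 2 - K * D = 0) (h1 : 2 * c * P * P' - K * D' = 0) :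
    P * D' = 2 * P' * D := by
  have wronskian : c * P * (P * D' - 2 * P' * D) = 0 := by
    linear_combination D' * h0 - D * h1
  have := (mul_eq_zero.1 wronskian).resolve_left (mul_ne_zero hc hP)
  linear_combination this

theorem mul_sq_eq_of_double_root (hc : c ≠ 0) (hP : P ≠ 0)
    (h0 : c * P ^ 2 - K * D = 0) (h1 : 2 * c * P * P' - K * D' = 0) :
    K * D' ^ 2 = 4 * c * P' ^ 2 * D := by
  linear_combination 2 * c * P' * mul_sub_mul_eq_zero_of_double_root hc hP h0 h1 - D' * h1

end DoubleRoot

theorem double_root_determines_rescaled_constants_general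
    (a E L K r₀ : ℝ) (ha : a ≠ 0) (hE : E ≠ 0)
    (χ : ℝ) (hχ0 : χ ≠ 0)
    (Δ Δ' R R' : ℝ → ℝ)
    (hR : ∀ r, R r = χ ^ 2 * ((r ^ 2 + a ^ 2) * E - a * L) ^ 2 - K * Δ r)
    (hR' : ∀ r, R' r = 4 * χ ^ 2 * r * E * ((r ^ 2 + a ^ 2) * E - a * L) - K * Δ' r)
    (hΔ'0 : Δ' r₀ ≠ 0) (hP : (r₀ ^ 2 + a ^ 2) * E - a * L ≠ 0)
    (h0 : R r₀ = 0) (h1 : R' r₀ = 0) :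
    L / E = ((r₀ ^ 2 + a ^ 2) * Δ' r₀ - 4 * r₀ * Δ r₀) / (a * Δ' r₀) ∧
    K / (χ ^ 2 * E ^ 2) = 16 * r₀ ^ 2 * Δ r₀ / (Δ' r₀) ^ 2 := by
  have hχ2 : χ ^ 2 ≠ 0 := pow_ne_zero 2 hχ0
  have e0 : χ ^ 2 * ((r₀ ^ 2 + a ^ 2) * E - a * L) ^ 2 - K * Δ r₀ = 0 := by
    linear_combination h0 - hR r₀
  have e1 : 2 * χ ^ 2 * ((r₀ ^ 2 + a ^ 2) * E - a * L) * (2 * r₀ * E) - K * Δ' r₀ = 0 := by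
    linear_combination h1 - hR' r₀
  have hL := mul_sub_mul_eq_zero_of_double_root hχ2 hP e0 e1
  have hK := mul_sq_eq_of_double_root hχ2 hP e0 e1
  constructor
  · field_simp
    linear_combination -hL
  · field_simp
    linear_combination hK

/-- Solving the double-root conditions `R(r₀) = R'(r₀) = 0` of the Kerr–de Sitter radial
null-geodesic potential for the rescaled constants `l = L/E` and `k = K/(χ²E²)`. -/
theorem double_root_determines_rescaled_constants
    (a lam E L K r₀ : ℝ) (ha : a ≠ 0) (hE : E ≠ 0)
    (χ : ℝ) (hχ : χ = 1 + a ^ 2 * lam) (hχ0 : χ ≠ 0)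
    (Δ Δ' R R' : ℝ → ℝ)
    (hΔ : ∀ r, Δ r = (1 - lam * r ^ 2) * (r ^ 2 + a ^ 2) - 2 * r)
    (hΔ' : ∀ r, Δ' r = 2 * r * (1 - lam * r ^ 2) - 2 * lam * r * (r ^ 2 + a ^ 2) - 2)
    (hR : ∀ r, R r = χ ^ 2 * ((r ^ 2 + a ^ 2) * E - a * L) ^ 2 - K * Δ r)
    (hR' : ∀ r, R' r = 4 * χ ^ 2 * r * E * ((r ^ 2 + a ^ 2) * E - a * L) - K * Δ' r)
    (hΔ'0 : Δ' r₀ ≠ 0) (hP : (r₀ ^ 2 + a ^ 2) * E - a * L ≠ 0)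
    (h0 : R r₀ = 0) (h1 : R' r₀ = 0) :
    L / E = ((r₀ ^ 2 + a ^ 2) * Δ' r₀ - 4 * r₀ * Δ r₀) / (a * Δ' r₀) ∧
    K / (χ ^ 2 * E ^ 2) = 16 * r₀ ^ 2 * Δ r₀ / (Δ' r₀) ^ 2 :=
  double_root_determines_rescaled_constants_general a E L K r₀ ha hE χ hχ0 Δ Δ' R R' hR hR' hΔ'0 hP
    h0 h1
end

section
/- Let a, λ, r ∈ ℝ with a ≠ 0. Let Δ(r) = (1 − λr²)(r² + a²) − 2r with derivative Δ'(r) = 2r(1 − λr²) − 2λr(r² + a²) − 2, and suppose Δ'(r) ≠ 0. Define k = 16 r² Δ(r)/Δ'(r)² and l = ((r² + a²)Δ'(r) − 4rΔ(r))/(a Δ'(r)). Then k − (a − l)² = (r²/(a² Δ'(r)²)) · ( 16 Δ(r)(a² − Δ(r)) + rΔ'(r)(8Δ(r) − rΔ'(r)) ) = (4r³/(a² Δ'(r)²)) · ( 4a² − r(r − 3)² − a²λ r² (2(r + 3) + a²λ r) ). -/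
/-- Closed-form expression for `q = k − (a − l)²` at a double root of the Kerr–de Sitter
radial null-geodesic potential. -/
theorem q_closed_form_at_double_root
    (a lam r : ℝ) (ha : a ≠ 0)
    (Δ Δ' : ℝ → ℝ)
    (hΔ : ∀ s, Δ s = (1 - lam * s ^ 2) * (s ^ 2 + a ^ 2) - 2 * s)
    (hΔ' : ∀ s, Δ' s = 2 * s * (1 - lam * s ^ 2) - 2 * lam * s * (s ^ 2 + a ^ 2) - 2)
    (hne : Δ' r ≠ 0)
    (k l : ℝ)
    (hk : k = 16 * r ^ 2 * Δ r / (Δ' r) ^ 2)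
    (hl : l = ((r ^ 2 + a ^ 2) * Δ' r - 4 * r * Δ r) / (a * Δ' r)) :
    k - (a - l) ^ 2
        = r ^ 2 / (a ^ 2 * (Δ' r) ^ 2) *
            (16 * Δ r * (a ^ 2 - Δ r) + r * Δ' r * (8 * Δ r - r * Δ' r)) ∧
    k - (a - l) ^ 2
        = 4 * r ^ 3 / (a ^ 2 * (Δ' r) ^ 2) *
            (4 * a ^ 2 - r * (r - 3) ^ 2
              - a ^ 2 * lam * r ^ 2 * (2 * (r + 3) + a ^ 2 * lam * r)) := by
  have hD := hΔ r
  have hD' := hΔ' r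
  subst hk hl
  constructor <;> field_simp <;> rw [hD, hD'] <;> ring
end

section
/- Let a, λ, L, K, r₀ ∈ ℝ with K > 0, λ ≥ 0 and a²λ < 1. Set χ = 1 + a²λ, Δ(r) = (1 − λr²)(r² + a²) − 2r with derivative Δ'(r), and R(r) = χ²a²L² − K·Δ(r) (the radial null-geodesic potential with E = 0). Then: (a) if R(r₀) = 0 and R'(r₀) = 0, then Δ'(r₀) = 0 and K·Δ(r₀) = χ²a²L²; (b) if moreover there exists θ ∈ (0, π) such that K(1 + a²λ cos²θ) − χ²L²/sin²θ ≥ 0, then χ²L² ≤ K, and consequently Δ(r₀) ≤ a². -/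
/-!
Part (a) is immediate: `R = χ²a²L² − KΔ` and `R' = −KΔ'` with `K ≠ 0`. For (b), multiplying the
angular condition by `sin²θ` gives `χ²L² ≤ K sin²θ (1 + a²λ cos²θ)`, and
`1 − sin²θ (1 + μ cos²θ) = cos²θ (cos²θ + (1 − μ) sin²θ) ≥ 0` whenever `μ ≤ 1`.
Then `KΔ(r₀) = a² · χ²L² ≤ a² K`.
-/

open Real

theorem sin_sq_mul_one_add_mul_cos_sq_le_one {μ : ℝ} (hμ : μ ≤ 1) (θ : ℝ) :
    sin θ ^ 2 * (1 + μ * cos θ ^ 2) ≤ 1 := by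
  have hcos : cos θ ^ 2 = 1 - sin θ ^ 2 := by linarith [sin_sq_add_cos_sq θ]
  have hgap : 1 - sin θ ^ 2 * (1 + μ * cos θ ^ 2)
      = cos θ ^ 2 * (cos θ ^ 2 + (1 - μ) * sin θ ^ 2) := by
    rw [hcos]; ring
  have : 0 ≤ cos θ ^ 2 * (cos θ ^ 2 + (1 - μ) * sin θ ^ 2) := by
    have : 0 ≤ 1 - μ := by linarith
    positivity
  linarith

theorem le_of_angular_potential_nonneg {K μ C θ : ℝ} (hK : 0 ≤ K) (hμ : μ ≤ 1)
    (hsin : sin θ ≠ 0) (hΘ : 0 ≤ K * (1 + μ * cos θ ^ 2) - C / sin θ ^ 2) : C ≤ K :=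
  calc C ≤ K * (1 + μ * cos θ ^ 2) * sin θ ^ 2 := by
        rwa [sub_nonneg, div_le_iff₀ (by positivity)] at hΘ
    _ = K * (sin θ ^ 2 * (1 + μ * cos θ ^ 2)) := by ring
    _ ≤ K * 1 := mul_le_mul_of_nonneg_left (sin_sq_mul_one_add_mul_cos_sq_le_one hμ θ) hK
    _ = K := mul_one K

theorem zero_energy_double_root_general
    (a lam L K r₀ : ℝ) (hK : 0 < K) (ha : a ^ 2 * lam < 1)
    (χ : ℝ)
    (Δ Δ' R R' : ℝ → ℝ)
    (hR : ∀ r, R r = χ ^ 2 * a ^ 2 * L ^ 2 - K * Δ r)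
    (hR' : ∀ r, R' r = -(K * Δ' r)) :
    (R r₀ = 0 → R' r₀ = 0 → Δ' r₀ = 0 ∧ K * Δ r₀ = χ ^ 2 * a ^ 2 * L ^ 2) ∧
    (R r₀ = 0 → R' r₀ = 0 →
      (∃ θ ∈ Set.Ioo (0 : ℝ) Real.pi,
        0 ≤ K * (1 + a ^ 2 * lam * Real.cos θ ^ 2) - χ ^ 2 * L ^ 2 / Real.sin θ ^ 2) →
      χ ^ 2 * L ^ 2 ≤ K ∧ Δ r₀ ≤ a ^ 2) := by
  have double_root (h : R r₀ = 0) (h' : R' r₀ = 0) :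
      Δ' r₀ = 0 ∧ K * Δ r₀ = χ ^ 2 * a ^ 2 * L ^ 2 := by
    rw [hR] at h
    rw [hR', neg_eq_zero, mul_eq_zero] at h'
    exact ⟨h'.resolve_left hK.ne', by linarith⟩
  refine ⟨double_root, fun h h' ⟨θ, hθ, hΘ⟩ => ?_⟩
  have hL : χ ^ 2 * L ^ 2 ≤ K :=
    le_of_angular_potential_nonneg hK.le ha.le (sin_pos_of_pos_of_lt_pi hθ.1 hθ.2).ne' hΘ
  refine ⟨hL, le_of_mul_le_mul_left ?_ hK⟩
  calc K * Δ r₀ = a ^ 2 * (χ ^ 2 * L ^ 2) := by rw [(double_root h h').2]; ring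
    _ ≤ a ^ 2 * K := mul_le_mul_of_nonneg_left hL (sq_nonneg a)
    _ = K * a ^ 2 := mul_comm _ _

/-- Exclusion of `E = 0` double roots of the Kerr–de Sitter radial null-geodesic
potential: (a) a double root forces `Δ'(r₀) = 0` and `K·Δ(r₀) = χ²a²L²`; (b) if moreover
the angular potential is somewhere nonnegative, then `χ²L² ≤ K` and `Δ(r₀) ≤ a²`. -/
theorem zero_energy_double_root
    (a lam L K r₀ : ℝ) (hK : 0 < K) (hlam : 0 ≤ lam) (ha : a ^ 2 * lam < 1)
    (χ : ℝ) (hχ : χ = 1 + a ^ 2 * lam)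
    (Δ Δ' R R' : ℝ → ℝ)
    (hΔ : ∀ r, Δ r = (1 - lam * r ^ 2) * (r ^ 2 + a ^ 2) - 2 * r)
    (hΔ' : ∀ r, Δ' r = 2 * r * (1 - lam * r ^ 2) - 2 * lam * r * (r ^ 2 + a ^ 2) - 2)
    (hR : ∀ r, R r = χ ^ 2 * a ^ 2 * L ^ 2 - K * Δ r)
    (hR' : ∀ r, R' r = -(K * Δ' r)) :
    (R r₀ = 0 → R' r₀ = 0 → Δ' r₀ = 0 ∧ K * Δ r₀ = χ ^ 2 * a ^ 2 * L ^ 2) ∧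
    (R r₀ = 0 → R' r₀ = 0 →
      (∃ θ ∈ Set.Ioo (0 : ℝ) Real.pi,
        0 ≤ K * (1 + a ^ 2 * lam * Real.cos θ ^ 2) - χ ^ 2 * L ^ 2 / Real.sin θ ^ 2) →
      χ ^ 2 * L ^ 2 ≤ K ∧ Δ r₀ ≤ a ^ 2) :=
  zero_energy_double_root_general a lam L K r₀ hK ha χ Δ Δ' R R' hR hR'
end

section
/- Let a, λ, r, r_X, D ∈ ℝ with λ ≥ 0, a²λ < 1, and D ≥ 0. For s ∈ [0, 1] define N(s) = a²(1 − s)(1 + a²λ s)(r_X² − r²)² − D(r_X² + a² s)². Then N is nonincreasing (antitone) on [0, 1]; in particular N(s) ≤ N(0) = a²(r_X² − r²)² − D r_X⁴ for all s ∈ [0, 1]. -/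
/-! For `s ≤ t`, `(1 - s)(1 + c s) - (1 - t)(1 + c t) = (t - s)((1 - c) + c (s + t))`, which is
nonnegative once `0 ≤ c ≤ 1` and `s, t ≥ 0`; here `c = a²λ`. The subtracted term `D (r_X² + a² s)²`
is nondecreasing in `s ≥ 0` since `D ≥ 0`. -/

theorem one_sub_mul_one_add_mul_le {c s t : ℝ} (hc₀ : 0 ≤ c) (hc₁ : c ≤ 1) (hs : 0 ≤ s)
    (hst : s ≤ t) : (1 - t) * (1 + c * t) ≤ (1 - s) * (1 + c * s) := by
  have hdiff : (1 - s) * (1 + c * s) - (1 - t) * (1 + c * t)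
      = (t - s) * ((1 - c) + c * (s + t)) := by ring
  have hpos : 0 ≤ (t - s) * ((1 - c) + c * (s + t)) :=
    mul_nonneg (sub_nonneg.2 hst)
      (add_nonneg (sub_nonneg.2 hc₁) (mul_nonneg hc₀ (by linarith)))
  linarith

/-- Monotonicity in `s = cos²θ` of the numerator of the squared norm of the Killing field
`∂_{t_X}` on the Kerr–de Sitter exterior. -/
theorem killing_norm_numerator_antitone
    (a lam r rX D : ℝ) (hlam : 0 ≤ lam) (ha : a ^ 2 * lam < 1) (hD : 0 ≤ D)
    (N : ℝ → ℝ)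
    (hN : ∀ s, N s = a ^ 2 * (1 - s) * (1 + a ^ 2 * lam * s) * (rX ^ 2 - r ^ 2) ^ 2
        - D * (rX ^ 2 + a ^ 2 * s) ^ 2) :
    AntitoneOn N (Set.Icc 0 1) ∧
    (∀ s ∈ Set.Icc (0 : ℝ) 1, N s ≤ a ^ 2 * (rX ^ 2 - r ^ 2) ^ 2 - D * rX ^ 4) ∧
    N 0 = a ^ 2 * (rX ^ 2 - r ^ 2) ^ 2 - D * rX ^ 4 := by
  have hN₀ : N 0 = a ^ 2 * (rX ^ 2 - r ^ 2) ^ 2 - D * rX ^ 4 := by rw [hN]; ring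
  have hanti : AntitoneOn N (Set.Icc 0 1) := by
    rintro s ⟨hs, -⟩ t - hst
    have hquad := one_sub_mul_one_add_mul_le (mul_nonneg (sq_nonneg a) hlam) ha.le hs hst
    have hsq : (rX ^ 2 + a ^ 2 * s) ^ 2 ≤ (rX ^ 2 + a ^ 2 * t) ^ 2 := by gcongr
    rw [hN, hN]
    linarith [mul_le_mul_of_nonneg_left hquad (by positivity : 0 ≤ a ^ 2 * (rX ^ 2 - r ^ 2) ^ 2),
      mul_le_mul_of_nonneg_left hsq hD]
  refine ⟨hanti, fun s hs => ?_, hN₀⟩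
  rw [← hN₀]
  exact hanti (Set.left_mem_Icc.2 zero_le_one) hs hs.1
end

section
/- Let a, λ ∈ ℝ with λ > 0, and define p(r) = −λr⁴ − (1 + 3λa²)r² − 2r + λ²a⁶ and χ = 1 + a²λ, Δ(r) = (1 − λr²)(r² + a²) − 2r. Then: (a) p is strictly decreasing on [0, ∞); (b) if moreover 0 < a²λ < 1 and r₋ > 0 satisfies Δ(r₋) = 0, then p(r₋) = χ(χ − 2)a² − 2χ r₋², and this quantity is strictly negative. -/
/-! Each monomial `-α r⁴`, `-β r²`, `-γ r` with `α, β ≥ 0 < γ` is antitone on `[0, ∞)`, the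
linear one strictly, which gives (a). For (b), expanding shows
`p(r) = Δ(r) + χ(χ − 2)a² − 2χr²`, so at a root of `Δ` the value is this quadratic expression;
with `0 < χ < 2` its first term is `≤ 0` and its second `< 0` for `r ≠ 0`. -/

theorem strictAntiOn_quartic_Ici {α β γ δ : ℝ} (hα : 0 ≤ α) (hβ : 0 ≤ β) (hγ : 0 < γ) :
    StrictAntiOn (fun r : ℝ => -α * r ^ 4 - β * r ^ 2 - γ * r + δ) (Set.Ici 0) := by
  intro x hx y _ hxy
  have hx : (0 : ℝ) ≤ x := hx
  have h2 : x ^ 2 ≤ y ^ 2 := pow_le_pow_left₀ hx hxy.le 2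
  have h4 : x ^ 4 ≤ y ^ 4 := pow_le_pow_left₀ hx hxy.le 4
  have := mul_le_mul_of_nonneg_left h2 hβ
  have := mul_le_mul_of_nonneg_left h4 hα
  have := mul_lt_mul_of_pos_left hxy hγ
  simp only
  linarith

theorem quadratic_neg_of_pos_of_le_two {χ a r : ℝ} (hχ₀ : 0 < χ) (hχ₂ : χ ≤ 2) (hr : r ≠ 0) :
    χ * (χ - 2) * a ^ 2 - 2 * χ * r ^ 2 < 0 := by
  have hfirst : χ * (χ - 2) * a ^ 2 ≤ 0 :=
    mul_nonpos_of_nonpos_of_nonneg (mul_nonpos_of_nonneg_of_nonpos hχ₀.le (by linarith))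
      (sq_nonneg a)
  have hsecond : 0 < 2 * χ * r ^ 2 := by positivity
  linarith

/-- The polynomial `p(r) = −λr⁴ − (1 + 3λa²)r² − 2r + λ²a⁶` bounding the gradient of the
time function in the proof of global hyperbolicity: it is strictly decreasing on `[0, ∞)`,
and at the inner horizon radius `r₋` it equals `χ(χ−2)a² − 2χr₋² < 0`. -/
theorem time_function_polynomial_negative
    (a lam : ℝ) (hlam : 0 < lam)
    (p : ℝ → ℝ)
    (hp : ∀ r, p r = -lam * r ^ 4 - (1 + 3 * lam * a ^ 2) * r ^ 2 - 2 * r + lam ^ 2 * a ^ 6)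
    (χ : ℝ) (hχ : χ = 1 + a ^ 2 * lam)
    (Δ : ℝ → ℝ) (hΔ : ∀ r, Δ r = (1 - lam * r ^ 2) * (r ^ 2 + a ^ 2) - 2 * r) :
    StrictAntiOn p (Set.Ici 0) ∧
    (∀ rm : ℝ, 0 < a ^ 2 * lam → a ^ 2 * lam < 1 → 0 < rm → Δ rm = 0 →
      p rm = χ * (χ - 2) * a ^ 2 - 2 * χ * rm ^ 2 ∧
      χ * (χ - 2) * a ^ 2 - 2 * χ * rm ^ 2 < 0) := by
  have hp_eq : p = fun r => -lam * r ^ 4 - (1 + 3 * lam * a ^ 2) * r ^ 2 - 2 * r + lam ^ 2 * a ^ 6 :=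
    funext hp
  have hp_Δ : ∀ r, p r = Δ r + (χ * (χ - 2) * a ^ 2 - 2 * χ * r ^ 2) := by
    intro r
    rw [hp, hΔ, hχ]
    ring
  refine ⟨hp_eq ▸ strictAntiOn_quartic_Ici hlam.le (by positivity) two_pos, ?_⟩
  intro rm hpos hlt hrm hroot
  refine ⟨by rw [hp_Δ, hroot, zero_add], ?_⟩
  exact quadratic_neg_of_pos_of_le_two (by linarith) (by linarith) hrm.ne'
end
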